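/- Let P_ε, Θ ∈ ℝ^{N×N} with P_ε·1 = P_εᵀ·1 = 1 and Θ·1 = Θᵀ·1 = 0. Then lim_{k→∞} (P_ε+Θ)^k x(0) = x̄(0)·1 for all x(0) ∈ ℝ^N (average-consensus) if and only if ρ(P_ε + Θ − (1/N)·1·1ᵀ) < 1. -/

import Mathlib

/-!
Put `A = P + Θ` and `J = (1/N)·𝟙𝟙ᵀ`. Since `A` has unit row and column sums, `AJ = JA = J = J²`,
hence `(A - J)^(k+1) = A^(k+1) - J`. Average consensus from every initial state is exactly
`A^k → J`, i.e. `(A - J)^k → 0`, and by Gelfand's formula the powers of an element of a complex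
Banach algebra tend to zero iff its spectral radius is below one.
-/

open Matrix Filter

/-- Spectral radius of a real matrix: supremum of moduli of its complex eigenvalues. -/
noncomputable def specRad {n : ℕ} (M : Matrix (Fin n) (Fin n) ℝ) : ℝ :=
  sSup {r : ℝ | ∃ μ : ℂ, (M.map (fun x : ℝ => (x : ℂ))).charpoly.IsRoot μ ∧ r = ‖μ‖}

open Topology
open scoped ENNReal NNReal

theorem tendsto_pow_atTop_nhds_zero_iff_spectralRadius_lt_one {A : Type*} [NormedRing A]
    [NormedAlgebra ℂ A] [CompleteSpace A] (a : A) :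
    Tendsto (a ^ ·) atTop (𝓝 0) ↔ spectralRadius ℂ a < 1 := by
  constructor
  · intro h
    have hsmall : Tendsto (fun k => ‖a ^ (k + 1)‖ * ‖(1 : A)‖) atTop (𝓝 0) := by
      simpa using ((tendsto_add_atTop_iff_nat 1).2 h).norm.mul_const ‖(1 : A)‖
    obtain ⟨k, hk⟩ := (hsmall.eventually_lt_const one_pos).exists
    calc spectralRadius ℂ a
        ≤ (‖a ^ (k + 1)‖₊ : ℝ≥0∞) ^ (1 / (k + 1) : ℝ) * (‖(1 : A)‖₊ : ℝ≥0∞) ^ (1 / (k + 1) : ℝ) :=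
          spectrum.spectralRadius_le_pow_nnnorm_pow_one_div ℂ a k
      _ = ((‖a ^ (k + 1)‖₊ * ‖(1 : A)‖₊ : ℝ≥0) : ℝ≥0∞) ^ (1 / (k + 1) : ℝ) := by
          rw [ENNReal.coe_mul, ENNReal.mul_rpow_of_nonneg _ _ (by positivity)]
      _ < 1 := ENNReal.rpow_lt_one (by exact_mod_cast hk) (by positivity)
  · intro h
    obtain ⟨c, hc, hc1⟩ := ENNReal.lt_iff_exists_nnreal_btwn.mp h
    have hgelfand := spectrum.pow_nnnorm_pow_one_div_tendsto_nhds_spectralRadius a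
    have hbound : ∀ᶠ k : ℕ in atTop, ‖a ^ k‖ ≤ (c : ℝ) ^ k := by
      filter_upwards [hgelfand.eventually_lt_const hc, eventually_ge_atTop 1] with k hk hk1
      have hk0 : (k : ℝ) ≠ 0 := by positivity
      have hle := ENNReal.rpow_le_rpow hk.le k.cast_nonneg
      rw [← ENNReal.rpow_mul, one_div, inv_mul_cancel₀ hk0, ENNReal.rpow_one,
        ENNReal.rpow_natCast, ← ENNReal.coe_pow, ENNReal.coe_le_coe] at hle
      exact_mod_cast hle
    exact squeeze_zero_norm' hbound
      (tendsto_pow_atTop_nhds_zero_of_lt_one c.coe_nonneg (by exact_mod_cast hc1))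

theorem sub_pow_succ_of_mul_eq {R : Type*} [Ring R] {a e : R} (hae : a * e = e) (hea : e * a = e)
    (he : IsIdempotentElem e) (k : ℕ) : (a - e) ^ (k + 1) = a ^ (k + 1) - e := by
  have hpow (k : ℕ) : a ^ k * e = e := by
    induction k with
    | zero => rw [pow_zero, one_mul]
    | succ k ih => rw [pow_succ, mul_assoc, hae, ih]
  induction k with
  | zero => rw [zero_add, pow_one, pow_one]
  | succ k ih => rw [pow_succ, ih, mul_sub, sub_mul, sub_mul, ← pow_succ, hpow, hea, he.eq]; abel

theorem tendsto_pow_atTop_nhds_iff_sub_pow {R : Type*} [Ring R] [TopologicalSpace R]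
    [IsTopologicalAddGroup R] {a e : R} (hae : a * e = e) (hea : e * a = e)
    (he : IsIdempotentElem e) :
    Tendsto (a ^ ·) atTop (𝓝 e) ↔ Tendsto ((a - e) ^ ·) atTop (𝓝 0) := by
  rw [← tendsto_add_atTop_iff_nat 1, ← tendsto_add_atTop_iff_nat 1 (f := ((a - e) ^ ·))]
  simp only [sub_pow_succ_of_mul_eq hae hea he]
  exact tendsto_sub_nhds_zero_iff.symm

theorem tendsto_mulVec_iff {α m n R : Type*} [Fintype n] [DecidableEq n] [Semiring R]
    [TopologicalSpace R] [IsTopologicalSemiring R] {l : Filter α} {M : α → Matrix m n R}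
    {L : Matrix m n R} :
    (∀ x i, Tendsto (fun k => (M k *ᵥ x) i) l (𝓝 ((L *ᵥ x) i))) ↔ Tendsto M l (𝓝 L) := by
  refine ⟨fun h => tendsto_pi_nhds.2 fun i => tendsto_pi_nhds.2 fun j => ?_, fun h x i => ?_⟩
  · simpa [mulVec_single_one] using h (Pi.single j 1) i
  · exact ((continuous_apply i).comp
      (continuous_id.matrix_mulVec continuous_const)).continuousAt.tendsto.comp h

section Averaging

variable {l m n R : Type*} [Fintype n] [Semiring R]

theorem mul_const_of_mulVec_one {M : Matrix m n R} (hM : M *ᵥ (fun _ => 1) = fun _ => 1)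
    (c : R) :
    M * (of fun _ _ => c : Matrix n l R) = of fun _ _ => c := by
  ext i j
  simpa [mul_apply, ← Finset.sum_mul, mulVec, dotProduct] using congrArg (· * c) (congrFun hM i)

theorem const_mul_of_vecMul_one {M : Matrix n m R} (hM : vecMul (fun _ => 1) M = fun _ => 1)
    (c : R) :
    (of fun _ _ => c : Matrix l n R) * M = of fun _ _ => c := by
  ext i j
  simpa [mul_apply, ← Finset.mul_sum, vecMul, dotProduct] using congrArg (c * ·) (congrFun hM j)

theorem const_mulVec (c : R) (x : n → R) :
    (of fun _ _ => c : Matrix m n R) *ᵥ x = fun _ => c * ∑ j, x j := by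
  ext i
  simp [mulVec, dotProduct, Finset.mul_sum]

theorem isIdempotentElem_const_inv_card {K : Type*} [DivisionRing K] [CharZero K] :
    IsIdempotentElem (of fun _ _ => (Fintype.card n : K)⁻¹ : Matrix n n K) := by
  ext i j
  -- An entry exists, so `card n ≠ 0` and the junk value `0⁻¹ = 0` never occurs.
  have : Nonempty n := ⟨i⟩
  simp [mul_apply]

end Averaging

theorem specRad_eq_sSup_norm_spectrum {n : ℕ} (M : Matrix (Fin n) (Fin n) ℝ) :
    specRad M = sSup (norm '' spectrum ℂ (M.map Complex.ofReal)) := by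
  simp only [specRad, mem_spectrum_iff_isRoot_charpoly, Set.image, eq_comm]

theorem spectralRadius_map_ofReal {n : ℕ} (M : Matrix (Fin n) (Fin n) ℝ) :
    spectralRadius ℂ (M.map Complex.ofReal) = ENNReal.ofReal (specRad M) := by
  rw [specRad_eq_sSup_norm_spectrum]
  set σ := spectrum ℂ (M.map Complex.ofReal) with hσdef
  have hfin : (norm '' σ).Finite := (Matrix.finite_spectrum _).image _
  rcases σ.eq_empty_or_nonempty with hσ | hσ
  · simp [spectralRadius, ← hσdef, hσ]
  obtain ⟨μ, hμ, hmax⟩ := (hσ.image _).csSup_mem hfin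
  rw [← hmax]
  refine le_antisymm (iSup₂_le fun ν hν => ?_) (le_iSup₂_of_le μ hμ ?_)
  · rw [← enorm_eq_nnnorm, ← ofReal_norm]
    exact ENNReal.ofReal_le_ofReal (hmax ▸ le_csSup hfin.bddAbove ⟨ν, hν, rfl⟩)
  · rw [← enorm_eq_nnnorm, ← ofReal_norm]

theorem specRad_lt_one_iff_tendsto_pow {n : ℕ} (M : Matrix (Fin n) (Fin n) ℝ) :
    specRad M < 1 ↔ Tendsto (M ^ ·) atTop (𝓝 0) := by
  let := Matrix.linftyOpNormedRing (n := Fin n) (α := ℂ)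
  let := Matrix.linftyOpNormedAlgebra (n := Fin n) (R := ℂ) (α := ℂ)
  rw [← ENNReal.ofReal_lt_one, ← spectralRadius_map_ofReal,
    ← tendsto_pow_atTop_nhds_zero_iff_spectralRadius_lt_one,
    Complex.isometry_ofReal.isEmbedding.matrix_map.tendsto_nhds_iff]
  have hpow (k : ℕ) : (M ^ k).map Complex.ofReal = M.map Complex.ofReal ^ k :=
    Matrix.map_pow M Complex.ofRealHom k
  simp only [Function.comp_def, Matrix.map_zero _ Complex.ofReal_zero, hpow]
  -- Both sides agree up to instances: the `linfty` operator norm induces the product topology.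
  exact Iff.rfl

theorem partial_link_consensus_iff_general {N : ℕ} (P Θ : Matrix (Fin N) (Fin N) ℝ)
    (hP1 : P *ᵥ (fun _ => 1) = (fun _ => 1))
    (hP2 : Matrix.vecMul (fun _ => 1) P = (fun _ => 1))
    (hT1 : Θ *ᵥ (fun _ => 1) = 0)
    (hT2 : Matrix.vecMul (fun _ => 1) Θ = 0) :
    (∀ x0 : Fin N → ℝ, ∀ i, Tendsto (fun k => (((P + Θ) ^ k) *ᵥ x0) i) atTop
      (nhds ((N : ℝ)⁻¹ * ∑ j, x0 j))) ↔
    specRad (P + Θ - Matrix.of fun _ _ => (N : ℝ)⁻¹) < 1 := by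
  have hrow : (P + Θ) *ᵥ (fun _ => 1) = fun _ => 1 := by rw [add_mulVec, hP1, hT1, add_zero]
  have hcol : vecMul (fun _ => 1) (P + Θ) = fun _ => 1 := by rw [vecMul_add, hP2, hT2, add_zero]
  have hJ : IsIdempotentElem (of fun _ _ => (N : ℝ)⁻¹ : Matrix (Fin N) (Fin N) ℝ) := by
    simpa using isIdempotentElem_const_inv_card (n := Fin N) (K := ℝ)
  rw [specRad_lt_one_iff_tendsto_pow, ← tendsto_pow_atTop_nhds_iff_sub_pow
    (mul_const_of_mulVec_one hrow _) (const_mul_of_vecMul_one hcol _) hJ, ← tendsto_mulVec_iff]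
  simp only [const_mulVec]

/-- Partial-link MPC consensus condition: with `P_ε·1 = P_εᵀ·1 = 1` and
`Θ·1 = Θᵀ·1 = 0`, average-consensus `(P_ε+Θ)^k x(0) → x̄(0)·1` holds for all `x(0)`
iff `ρ(P_ε + Θ − (1/N)·1·1ᵀ) < 1`. -/
theorem partial_link_consensus_iff {N : ℕ} (hN : 0 < N) (P Θ : Matrix (Fin N) (Fin N) ℝ)
    (hP1 : P *ᵥ (fun _ => 1) = (fun _ => 1))
    (hP2 : Matrix.vecMul (fun _ => 1) P = (fun _ => 1))
    (hT1 : Θ *ᵥ (fun _ => 1) = 0)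
    (hT2 : Matrix.vecMul (fun _ => 1) Θ = 0) :
    (∀ x0 : Fin N → ℝ, ∀ i, Tendsto (fun k => (((P + Θ) ^ k) *ᵥ x0) i) atTop
      (nhds ((N : ℝ)⁻¹ * ∑ j, x0 j))) ↔
    specRad (P + Θ - Matrix.of fun _ _ => (N : ℝ)⁻¹) < 1 :=
  partial_link_consensus_iff_general P Θ hP1 hP2 hT1 hT2
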